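/- Let r, s ≥ 1, n = rs, and consider the partition of {1,…,n} into the r blocks Δ_i = {i, i+r, i+2r, …, i+(s−1)r} for i = 1,…,r. Let τ = (1 2 … n) ∈ S_n be the standard n-cycle, and let σ ∈ S_n be any permutation with σ(Δ_i) = Δ_i for all i. For each i, let σ_i ∈ S_s be the permutation induced by σ on Δ_i under the order-preserving bijection of Δ_i with {1,…,s}, and let ρ = (1 2 … s) ∈ S_s. Then: (a) (στ)^r preserves each block Δ_i, and the permutation it induces on Δ_1 (under the same identification) equals the product σ_1σ_2⋯σ_r·ρ (composing left to right); and (b) στ is an n-cycle if and only if σ_1σ_2⋯σ_r·ρ is an s-cycle in S_s. -/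

import Mathlib

/-!
Write `g = στ`. Since `σ` preserves blocks and `τ` adds one, `g` moves block `Δ_i` onto
`Δ_{i+1}` (indices mod `r`): on positions it acts by `σ_i`, except that leaving the last block
wraps around and adds `ρ`. Hence `g^r` preserves every block and, read on `Δ_1`, is
`σ_1 ⋯ σ_r ρ`. Moreover `Δ_1` is the fibre over `0` of the map `x ↦ x mod r`, which `g`
intertwines with `+1` on `ZMod r`; so an orbit of `⟨g⟩` meets `Δ_1` exactly in an orbit of
`⟨g^r⟩`, and `g` is transitive iff its first-return map `g^r` on `Δ_1` is.
-/

/-- The order-preserving identification of the block `Δ_{i+1} = {i, i+r, …, i+(s-1)r}`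
(0-indexed points `ZMod (r*s)`) with `ZMod s`: position `k` corresponds to the point
`i + k*r`. -/
def blockEmb (r s : ℕ) (i : Fin r) (k : ZMod s) : ZMod (r * s) :=
  (((i : ℕ) + k.val * r : ℕ) : ZMod (r * s))

/-- A permutation is a full cycle iff the cyclic group it generates acts transitively;
on a finite set of `n` points this says precisely that it is an `n`-cycle. -/
def IsFullCycle {α : Type*} (g : Equiv.Perm α) : Prop :=
  ∀ x y : α, ∃ m : ℤ, (g ^ m) x = y

/-- The left-to-right product `σ_1 σ_2 ⋯ σ_r` of a tuple of permutations
(apply `σ_1` first). -/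
def lrProd {α : Type*} {r : ℕ} (σ : Fin r → Equiv.Perm α) : Equiv.Perm α :=
  (List.ofFn σ).reverse.prod

open Equiv Function

lemma lrProd_castSucc {α : Type*} {m : ℕ} (f : Fin (m + 1) → Perm α) :
    lrProd f = (lrProd fun j : Fin m => f j.castSucc).trans (f (Fin.last m)) := by
  unfold lrProd
  rw [List.ofFn_succ', List.concat_eq_append, List.reverse_append, List.reverse_singleton,
    List.singleton_append, List.prod_cons]
  rfl

lemma pow_apply_eq_lrProd_of_chain {α β : Type*} {m : ℕ} (g : Perm β) (f : Fin (m + 1) → α → β)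
    (τ : Fin m → Perm α) (h : ∀ j k, g (f j.castSucc k) = f j.succ (τ j k)) (k : α) :
    (g ^ m) (f 0 k) = f (Fin.last m) (lrProd τ k) := by
  induction m with
  | zero => rfl
  | succ m ih =>
    have h' : ∀ (j : Fin m) k,
        g (f j.castSucc.castSucc k) = f j.succ.castSucc (τ j.castSucc k) := fun j k => by
      rw [h, Fin.succ_castSucc]
    have hinit := ih (f ∘ Fin.castSucc) (fun j => τ j.castSucc) h'
    simp only [comp_apply, Fin.castSucc_zero] at hinit
    rw [pow_succ', Perm.mul_apply, hinit, h, Fin.succ_last, lrProd_castSucc, trans_apply]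

lemma Function.Semiconj.perm_zpow {α β : Type*} {f : α → β} {h : Perm α} {g : Perm β}
    (hf : Semiconj f h g) (m : ℤ) : Semiconj f ⇑(h ^ m) ⇑(g ^ m) := by
  induction m using Int.induction_on with
  | zero => exact Semiconj.id_right
  | succ m ih => simpa only [zpow_add_one, Perm.coe_mul] using ih.comp_right hf
  | pred m ih =>
    have hinv : Semiconj f ⇑h⁻¹ ⇑g⁻¹ := fun k => by
      rw [eq_comm, Perm.inv_eq_iff_eq, ← hf, ← Perm.mul_apply, mul_inv_cancel, Perm.one_apply]
    simpa only [zpow_sub_one, Perm.coe_mul] using ih.comp_right hinv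

lemma apply_zpow_of_apply_eq_add_one {β : Type*} {r : ℕ} {g : Perm β} {π : β → ZMod r}
    (hπ : ∀ x, π (g x) = π x + 1) (m : ℤ) (x : β) : π ((g ^ m) x) = π x + m := by
  induction m using Int.induction_on generalizing x with
  | zero => simp
  | succ m ih => rw [zpow_add_one, Perm.mul_apply, ih, hπ]; push_cast; ring
  | pred m ih =>
    have hinv : π (g⁻¹ x) = π x - 1 := by
      rw [eq_sub_iff_add_eq, ← hπ, ← Perm.mul_apply, mul_inv_cancel, Perm.one_apply]
    rw [zpow_sub_one, Perm.mul_apply, ih, hinv]; push_cast; ring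

theorem isFullCycle_iff_of_firstReturn {α β : Type*} {r : ℕ} {g : Perm β} {h : Perm α}
    {π : β → ZMod r} (hπ : ∀ x, π (g x) = π x + 1) {f : α → β} (hf : Injective f)
    (hrange : Set.range f = π ⁻¹' {0}) (hgh : Semiconj f h ⇑(g ^ r)) :
    IsFullCycle g ↔ IsFullCycle h := by
  have hπf : ∀ k, π (f k) = 0 := fun k => by
    simpa [hrange] using Set.mem_range_self (f := f) k
  constructor
  · intro hg k k'
    obtain ⟨m, hm⟩ := hg (f k) (f k')
    have hdvd : (r : ℤ) ∣ m := by
      have := apply_zpow_of_apply_eq_add_one hπ m (f k)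
      rwa [hm, hπf, hπf, zero_add, eq_comm, ZMod.intCast_zmod_eq_zero_iff_dvd] at this
    obtain ⟨q, rfl⟩ := hdvd
    refine ⟨q, hf ?_⟩
    rw [hgh.perm_zpow, ← zpow_natCast, ← zpow_mul, hm]
  · intro hh x y
    have fibre : ∀ z : β, ∃ (a : ℤ) (k : α), f k = (g ^ (-a)) z := by
      intro z
      obtain ⟨a, ha⟩ := ZMod.intCast_surjective (π z)
      have : (g ^ (-a)) z ∈ Set.range f := by
        rw [hrange, Set.mem_preimage, Set.mem_singleton_iff,
          apply_zpow_of_apply_eq_add_one hπ, Int.cast_neg, ha, add_neg_cancel]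
      obtain ⟨k, hk⟩ := this
      exact ⟨a, k, hk⟩
    obtain ⟨a, k, hk⟩ := fibre x
    obtain ⟨b, k', hk'⟩ := fibre y
    obtain ⟨q, hq⟩ := hh k k'
    refine ⟨b + ((r : ℤ) * q + -a), ?_⟩
    rw [zpow_add, zpow_add, Perm.mul_apply, Perm.mul_apply, ← hk, zpow_mul, zpow_natCast,
      ← hgh.perm_zpow, hq, hk', ← Perm.mul_apply, ← zpow_add, add_neg_cancel,
      zpow_zero, Perm.one_apply]

def blockIndex (r s : ℕ) : ZMod (r * s) →+* ZMod r :=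
  ZMod.castHom (dvd_mul_right r s) (ZMod r)

section Blocks

variable {r s : ℕ}

lemma blockEmb_natCast (i : Fin r) (n : ℕ) :
    blockEmb r s i n = ((i + n * r : ℕ) : ZMod (r * s)) := by
  unfold blockEmb
  rw [ZMod.natCast_eq_natCast_iff, ZMod.val_natCast, mul_comm r s]
  exact ((Nat.mod_modEq n s).mul_right' r).add_left _

lemma blockIndex_blockEmb (i : Fin r) (k : ZMod s) :
    blockIndex r s (blockEmb r s i k) = (i : ℕ) := by
  simp [blockIndex, blockEmb]

lemma blockEmb_castSucc_add_one {m : ℕ} (i : Fin m) (k : ZMod s) :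
    blockEmb (m + 1) s i.castSucc k + 1 = blockEmb (m + 1) s i.succ k := by
  simp only [blockEmb, Fin.val_castSucc, Fin.val_succ]
  push_cast
  ring

variable [NeZero s]

lemma blockEmb_last_add_one {m : ℕ} (k : ZMod s) :
    blockEmb (m + 1) s (Fin.last m) k + 1 = blockEmb (m + 1) s 0 (k + 1) := by
  have hk : k + 1 = ((k.val + 1 : ℕ) : ZMod s) := by push_cast; rw [ZMod.natCast_zmod_val]
  rw [hk, blockEmb_natCast]
  simp only [blockEmb, Fin.val_last, Fin.val_zero]
  push_cast
  ring

lemma val_blockEmb (i : Fin r) (k : ZMod s) : (blockEmb r s i k).val = i + k.val * r := by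
  refine ZMod.val_cast_of_lt ?_
  have := ZMod.val_lt k
  nlinarith [i.isLt]

variable [NeZero r]

lemma blockEmb_injective (i : Fin r) : Injective (blockEmb r s i) := by
  intro k k' h
  have := congrArg ZMod.val h
  rw [val_blockEmb, val_blockEmb, add_right_inj, Nat.mul_left_inj (NeZero.ne r)] at this
  exact ZMod.val_injective s this

lemma exists_blockEmb_eq (x : ZMod (r * s)) :
    ∃ (i : Fin r) (k : ZMod s), blockEmb r s i k = x := by
  have hr : 0 < r := Nat.pos_of_neZero r
  refine ⟨⟨x.val % r, Nat.mod_lt _ hr⟩, (x.val / r : ℕ), ?_⟩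
  rw [blockEmb_natCast, Nat.mod_add_div', ZMod.natCast_zmod_val]

lemma range_blockEmb (i : Fin r) :
    Set.range (blockEmb r s i) = blockIndex r s ⁻¹' {((i : ℕ) : ZMod r)} := by
  ext x
  constructor
  · rintro ⟨k, rfl⟩
    exact blockIndex_blockEmb i k
  · intro hx
    obtain ⟨i', k', rfl⟩ := exists_blockEmb_eq x
    have h : ((i' : ℕ) : ZMod r) = (i : ℕ) := by
      rwa [Set.mem_preimage, Set.mem_singleton_iff, blockIndex_blockEmb] at hx
    have : i' = i := Fin.ext <| by
      simpa [ZMod.val_cast_of_lt i.isLt, ZMod.val_cast_of_lt i'.isLt] using congrArg ZMod.val h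
    exact ⟨k', this ▸ rfl⟩

end Blocks

/-- Let `n = rs`, `τ = (1 2 … n)` (i.e. `x ↦ x + 1` on 0-indexed points),
and let `σ` preserve each block `Δ_i`, inducing `σ_i` on `Δ_i`. Then `(στ)^r`
(products composed left to right, so `στ` is `x ↦ τ(σ(x))`) preserves each block,
induces `σ_1 σ_2 ⋯ σ_r ρ` on the first block, and `στ` is an `n`-cycle iff
`σ_1 σ_2 ⋯ σ_r ρ` is an `s`-cycle, where `ρ = (1 2 … s)`. -/
theorem stmt_8 (r s : ℕ) [NeZero r] [NeZero s]
    (σ : Equiv.Perm (ZMod (r * s)))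
    (σi : Fin r → Equiv.Perm (ZMod s))
    (hσ : ∀ (i : Fin r) (k : ZMod s), σ (blockEmb r s i k) = blockEmb r s i (σi i k)) :
    (∀ (i : Fin r) (k : ZMod s), ∃ k' : ZMod s,
        ((σ.trans (Equiv.addRight (1 : ZMod (r * s)))) ^ r) (blockEmb r s i k)
          = blockEmb r s i k') ∧
    (∀ k : ZMod s,
        ((σ.trans (Equiv.addRight (1 : ZMod (r * s)))) ^ r) (blockEmb r s 0 k)
          = blockEmb r s 0 (((lrProd σi).trans (Equiv.addRight (1 : ZMod s))) k)) ∧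
    (IsFullCycle (σ.trans (Equiv.addRight (1 : ZMod (r * s)))) ↔
      IsFullCycle ((lrProd σi).trans (Equiv.addRight (1 : ZMod s)))) := by
  obtain ⟨m, rfl⟩ := Nat.exists_eq_succ_of_ne_zero (NeZero.ne r)
  set g := σ.trans (Equiv.addRight (1 : ZMod ((m + 1) * s)))
  have hindex : ∀ x, blockIndex _ s (g x) = blockIndex _ s x + 1 := by
    intro x
    obtain ⟨i, k, rfl⟩ := exists_blockEmb_eq x
    simp only [g, trans_apply, coe_addRight, hσ, map_add, map_one, blockIndex_blockEmb]
  have hfirst : ∀ k, (g ^ (m + 1)) (blockEmb _ s 0 k)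
      = blockEmb _ s 0 (((lrProd σi).trans (Equiv.addRight 1)) k) := by
    intro k
    rw [pow_succ', Perm.mul_apply,
      pow_apply_eq_lrProd_of_chain g (blockEmb _ s) (fun j => σi j.castSucc)
        (fun j k => by simp only [g, trans_apply, hσ, coe_addRight, blockEmb_castSucc_add_one])]
    simp only [g, trans_apply, hσ, coe_addRight, blockEmb_last_add_one, lrProd_castSucc]
  refine ⟨fun i k => ?_, hfirst, isFullCycle_iff_of_firstReturn hindex (blockEmb_injective 0)
    (by simpa using range_blockEmb (s := s) (0 : Fin (m + 1))) fun k => (hfirst k).symm⟩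
  have hmem : (g ^ (m + 1)) (blockEmb _ s i k) ∈ Set.range (blockEmb _ s i) := by
    rw [range_blockEmb, Set.mem_preimage, Set.mem_singleton_iff, ← zpow_natCast,
      apply_zpow_of_apply_eq_add_one hindex, blockIndex_blockEmb]
    simp
  obtain ⟨k', hk'⟩ := hmem
  exact ⟨k', hk'.symm⟩
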